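/- The plane quartic curve over F_2 defined by x⁴ + y⁴ + z⁴ + x²y² + x²z² + y²z² + x²yz + xy²z + xyz² = 0 is smooth and has no F_2-rational points. -/
import Mathlib


open MvPolynomial

/-- Dickson's pointless plane quartic
`x⁴ + y⁴ + z⁴ + x²y² + x²z² + y²z² + x²yz + xy²z + xyz² = 0` over `F₂`. -/
noncomputable def pointlessQuartic : MvPolynomial (Fin 3) (ZMod 2) :=
  X 0 ^ 4 + X 1 ^ 4 + X 2 ^ 4 + X 0 ^ 2 * X 1 ^ 2 + X 0 ^ 2 * X 2 ^ 2 + X 1 ^ 2 * X 2 ^ 2 +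
    X 0 ^ 2 * X 1 * X 2 + X 0 * X 1 ^ 2 * X 2 + X 0 * X 1 * X 2 ^ 2

/-- The quartic is smooth (no singular point over the algebraic closure) and
has no `F₂`-rational point. -/
theorem stmt_4 :
    (¬ ∃ p : Fin 3 → AlgebraicClosure (ZMod 2), p ≠ 0 ∧
      aeval p pointlessQuartic = 0 ∧ ∀ i, aeval p (pderiv i pointlessQuartic) = 0) ∧
    ∀ p : Fin 3 → ZMod 2, p ≠ 0 → eval p pointlessQuartic ≠ 0 := by
  constructor
  · rintro ⟨p, hne, hF, hd⟩
    have h2 : (2 : AlgebraicClosure (ZMod 2)) = 0 := CharTwo.two_eq_zero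
    have h4 : (4 : AlgebraicClosure (ZMod 2)) = 0 := by linear_combination 2 * h2
    have hx := hd 0
    have hy := hd 1
    have hz := hd 2
    simp [pointlessQuartic, h2, h4] at hF hx hy hz
    obtain ⟨a, b, c, ha, hb, hc⟩ :
        ∃ a b c : AlgebraicClosure (ZMod 2), p 0 = a ∧ p 1 = b ∧ p 2 = c :=
      ⟨p 0, p 1, p 2, rfl, rfl, rfl⟩
    simp only [ha, hb, hc] at hF hx hy hz
    have Ha : a ^ 5 = 0 := by
      linear_combination a * hF + (a*c + a^2) * hx + (c^2 + b*c + a*c + a*b) * hy +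
        (b^2 + a*b) * hz + (-a*c^4 - a*b*c^3 - a*b^2*c^2 - a*b^4 - a^2*c^3 - 2*a^2*b*c^2
          - a^2*b^2*c - a^2*b^3 - a^3*c^2 - a^3*b*c - a^3*b^2) * h2
    have Hb : b ^ 5 = 0 := by
      linear_combination b * hF + (b*c + b^2) * hy + (c^2 + a*c + b*c + a*b) * hx +
        (a^2 + a*b) * hz + (-b*c^4 - b*a*c^3 - b*a^2*c^2 - b*a^4 - b^2*c^3 - 2*b^2*a*c^2
          - b^2*a^2*c - b^2*a^3 - b^3*c^2 - b^3*a*c - b^3*a^2) * h2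
    have Hc : c ^ 5 = 0 := by
      linear_combination c * hF + (a*c + c^2) * hz + (a^2 + a*b + a*c + b*c) * hy +
        (b^2 + b*c) * hx + (-c*a^4 - c*b*a^3 - c*b^2*a^2 - c*b^4 - c^2*a^3 - 2*c^2*b*a^2
          - c^2*b^2*a - c^2*b^3 - c^3*a^2 - c^3*b*a - c^3*b^2) * h2
    apply hne
    funext i
    fin_cases i
    · exact ha.trans (pow_eq_zero_iff (n := 5) (by norm_num) |>.mp Ha)
    · exact hb.trans (pow_eq_zero_iff (n := 5) (by norm_num) |>.mp Hb)
    · exact hc.trans (pow_eq_zero_iff (n := 5) (by norm_num) |>.mp Hc)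
  · intro p hp h
    have hv : ∀ x : ZMod 2, x = 0 ∨ x = 1 := by decide
    simp [pointlessQuartic] at h
    rcases hv (p 0) with h0 | h0 <;> rcases hv (p 1) with h1 | h1 <;>
      rcases hv (p 2) with h2 | h2 <;> rw [h0, h1, h2] at h <;>
      first
        | (apply hp; funext i; fin_cases i <;> simp only [Pi.zero_apply] <;> assumption)
        | (revert h; decide)
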